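/- With b₁ < n*, b₂ < m*, and n* = m*, in the zero-sum game where the defender chooses S with |S| ≤ b₁, the attacker chooses T with |T| ≤ b₂, and the defender's payoff is F(S,T), the value of the game equals b₁·b₂/n*, and the strategy profile (uniform over cyclic b₁-windows of a minimum set cover, uniform over cyclic b₂-windows of a maximum set packing) is a Nash equilibrium. -/

import Mathlib

/-!
Each element of `ZMod n` lies in exactly `b` of the `n` cyclic windows of length `b ≤ n`.
Against the attacker's windows over the packing, a defender set `S` monitors at most `|S|` packed
elements (each `C i` contains at most one of them), and each of those is attacked by `b₂` of the
`n` windows, so the defender gains at most `b₁ b₂ / n`. Against the defender's windows over the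
cover, every attacked element is monitored by some `f k`, and `f k` is chosen by `b₁` of the `n`
windows, so the defender gains at least `b₁ |T| / n` and the attacker at most
`(1 - b₁ / n) |T| ≤ (1 - b₁ / n) b₂`. Both bounds are attained by the cyclic profile.
-/

open Finset

/-- Defender's expected payoff `U₁(σ¹,σ²) = E[F(S,T)]` in the network
inspection game. -/
noncomputable def defenderPayoff {V E : Type*} [DecidableEq V] [DecidableEq E]
    [Fintype V] [Fintype E] (C : V → Finset E)
    (σ1 : Finset V → ℝ) (σ2 : Finset E → ℝ) : ℝ :=
  ∑ S : Finset V, ∑ T : Finset E,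
    σ1 S * σ2 T * ((S.biUnion C ∩ T).card : ℝ)

/-- Attacker's expected payoff `U₂(σ¹,σ²) = E[|T| − F(S,T)]`. -/
noncomputable def attackerPayoff {V E : Type*} [DecidableEq V] [DecidableEq E]
    [Fintype V] [Fintype E] (C : V → Finset E)
    (σ1 : Finset V → ℝ) (σ2 : Finset E → ℝ) : ℝ :=
  ∑ S : Finset V, ∑ T : Finset E,
    σ1 S * σ2 T * ((T.card : ℝ) - ((S.biUnion C ∩ T).card : ℝ))

def IsMixed {α : Type*} [Fintype α] [DecidableEq α] (b : ℕ) (σ : Finset α → ℝ) : Prop :=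
  (∀ A, 0 ≤ σ A) ∧ (∑ A : Finset α, σ A = 1) ∧ (∀ A, σ A ≠ 0 → A.card ≤ b)

lemma sum_card_inter_eq_sum_card_filter_mem {ι α : Type*} [Fintype ι] [DecidableEq α]
    (W : ι → Finset α) (s : Finset α) :
    ∑ i, #(s ∩ W i) = ∑ a ∈ s, #{i | a ∈ W i} := by
  simp_rw [← filter_mem_eq_inter, card_eq_sum_ones, sum_filter]
  exact sum_comm

lemma card_inter_image_of_injective {α β : Type*} [Fintype α] [DecidableEq α] [DecidableEq β]
    {g : α → β} (hg : Function.Injective g) (X : Finset β) (W : Finset α) :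
    #(X ∩ W.image g) = #(({a | g a ∈ X} : Finset α) ∩ W) := by
  rw [inter_comm, ← filter_mem_eq_inter, filter_image, card_image_of_injective _ hg,
    inter_comm, ← filter_mem_eq_inter]
  simp

lemma card_filter_mem_biUnion_le {ι V E : Type*} [Fintype ι] [DecidableEq V] [DecidableEq E]
    (C : V → Finset E) {g : ι → E} (hg : Function.Injective g)
    (hpack : ∀ i : V, #(C i ∩ univ.image g) ≤ 1) (S : Finset V) :
    #{m | g m ∈ S.biUnion C} ≤ #S := by
  have hsub : ({m | g m ∈ S.biUnion C} : Finset ι).image g ⊆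
      S.biUnion fun i => C i ∩ univ.image g := by
    intro e he
    obtain ⟨m, hm, rfl⟩ := mem_image.1 he
    obtain ⟨i, hi, hmi⟩ := mem_biUnion.1 (mem_filter.1 hm).2
    exact mem_biUnion.2 ⟨i, hi, mem_inter.2 ⟨hmi, mem_image_of_mem g (mem_univ m)⟩⟩
  calc #{m | g m ∈ S.biUnion C} = #(({m | g m ∈ S.biUnion C} : Finset ι).image g) :=
        (card_image_of_injective _ hg).symm
    _ ≤ ∑ i ∈ S, #(C i ∩ univ.image g) := (card_le_card hsub).trans card_biUnion_le
    _ ≤ #S := card_eq_sum_ones S ▸ sum_le_sum fun i _ => hpack i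

lemma IsMixed.sum_mul_le {α : Type*} [Fintype α] [DecidableEq α] {b : ℕ} {σ : Finset α → ℝ}
    (hσ : IsMixed b σ) {h : Finset α → ℝ} {c : ℝ} (hc : ∀ A, #A ≤ b → h A ≤ c) :
    ∑ A, σ A * h A ≤ c := by
  obtain ⟨hpos, hsum, hsupp⟩ := hσ
  calc ∑ A, σ A * h A ≤ ∑ A, σ A * c := sum_le_sum fun A _ => by
        by_cases h0 : σ A = 0
        · simp [h0]
        · exact mul_le_mul_of_nonneg_left (hc A (hsupp A h0)) (hpos A)
    _ = c := by rw [← sum_mul, hsum, one_mul]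

section CyclicWindow

variable {n : ℕ}

def cyclicWindow (b : ℕ) (k : ZMod n) : Finset (ZMod n) :=
  (range b).image fun t : ℕ => k + t

lemma image_cyclicWindow {α : Type*} [DecidableEq α] (f : ZMod n → α) (b : ℕ) (k : ZMod n) :
    (cyclicWindow b k).image f = (range b).image fun t : ℕ => f (k + t) :=
  image_image

lemma injOn_natCast_range {b : ℕ} (hb : b ≤ n) : Set.InjOn (Nat.cast : ℕ → ZMod n) (range b) :=
  (CharP.natCast_injOn_Iio (ZMod n) n).mono (by simpa using hb)

lemma card_cyclicWindow {b : ℕ} (hb : b ≤ n) (k : ZMod n) : #(cyclicWindow b k) = b := by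
  rw [cyclicWindow, card_image_of_injOn fun x hx y hy h =>
    injOn_natCast_range hb hx hy (add_left_cancel h), card_range]

variable [NeZero n]

lemma card_filter_mem_cyclicWindow {b : ℕ} (hb : b ≤ n) (m : ZMod n) :
    #{k | m ∈ cyclicWindow b k} = b := by
  have hfilter : ({k | m ∈ cyclicWindow b k} : Finset (ZMod n)) =
      (range b).image fun t : ℕ => m - t := by
    ext k
    simp only [cyclicWindow, mem_filter, mem_univ, true_and, mem_image, mem_range]
    exact exists_congr fun t => and_congr_right fun _ => by
      constructor <;> intro h <;> rw [← h] <;> ring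
  rw [hfilter, card_image_of_injOn fun x hx y hy h =>
    injOn_natCast_range hb hx hy (sub_right_injective h), card_range]

lemma sum_card_inter_cyclicWindow {b : ℕ} (hb : b ≤ n) (s : Finset (ZMod n)) :
    ∑ k, #(s ∩ cyclicWindow b k) = b * #s := by
  rw [sum_card_inter_eq_sum_card_filter_mem]
  simp [card_filter_mem_cyclicWindow hb, mul_comm]

end CyclicWindow

section InspectionGame

variable {V E : Type*} [DecidableEq V] [DecidableEq E] [Fintype V] [Fintype E] (C : V → Finset E)

lemma defenderPayoff_eq_sum_mul_left (σ : Finset V → ℝ) (τ : Finset E → ℝ) :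
    defenderPayoff C σ τ = ∑ S, σ S * ∑ T, τ T * #(S.biUnion C ∩ T) := by
  simp_rw [defenderPayoff, mul_sum, mul_assoc]

lemma defenderPayoff_eq_sum_mul_right (σ : Finset V → ℝ) (τ : Finset E → ℝ) :
    defenderPayoff C σ τ = ∑ T, τ T * ∑ S, σ S * #(S.biUnion C ∩ T) := by
  rw [defenderPayoff, sum_comm]
  simp_rw [mul_sum]
  exact sum_congr rfl fun _ _ => sum_congr rfl fun _ _ => by ring

lemma attackerPayoff_eq_sub {σ : Finset V → ℝ} (hσ : ∑ S, σ S = 1) (τ : Finset E → ℝ) :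
    attackerPayoff C σ τ = ∑ T, τ T * #T - defenderPayoff C σ τ := by
  rw [attackerPayoff, defenderPayoff, ← one_mul (∑ T, τ T * _), ← hσ, sum_mul_sum,
    ← sum_sub_distrib]
  exact sum_congr rfl fun _ _ => by rw [← sum_sub_distrib]; exact sum_congr rfl fun _ _ => by ring

end InspectionGame

section CyclicStrategy

variable {n : ℕ} [NeZero n]

noncomputable def cyclicStrategy {α : Type*} [DecidableEq α] (f : ZMod n → α) (b : ℕ)
    (A : Finset α) : ℝ :=
  #{k | (cyclicWindow b k).image f = A} / n

variable {α : Type*} [DecidableEq α] [Fintype α]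

lemma sum_cyclicStrategy_mul (f : ZMod n → α) (b : ℕ) (h : Finset α → ℝ) :
    ∑ A, cyclicStrategy f b A * h A = (∑ k, h ((cyclicWindow b k).image f)) / n := by
  rw [← sum_fiberwise' univ (fun k => (cyclicWindow b k).image f) h, sum_div]
  refine sum_congr rfl fun A _ => ?_
  rw [cyclicStrategy, sum_const, nsmul_eq_mul]
  ring

lemma isMixed_cyclicStrategy (f : ZMod n → α) (b : ℕ) : IsMixed b (cyclicStrategy f b) := by
  refine ⟨fun A => by unfold cyclicStrategy; positivity, ?_, fun A hA => ?_⟩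
  · have := sum_cyclicStrategy_mul f b fun _ => 1
    simp_rw [mul_one] at this
    rw [this, sum_const, card_univ, ZMod.card, nsmul_one]
    exact div_self (NeZero.ne _)
  · obtain ⟨k, rfl⟩ : ∃ k, (cyclicWindow b k).image f = A := by
      by_contra! h
      exact hA (by simp [cyclicStrategy, h])
    exact card_image_le.trans (card_image_le.trans (card_range b).le)

lemma sum_cyclicStrategy_mul_card {f : ZMod n → α} (hf : Function.Injective f) {b : ℕ}
    (hb : b ≤ n) : ∑ A, cyclicStrategy f b A * #A = b := by
  simp_rw [sum_cyclicStrategy_mul, card_image_of_injective _ hf, card_cyclicWindow hb]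
  rw [sum_const, card_univ, ZMod.card, nsmul_eq_mul]
  exact mul_div_cancel_left₀ _ (Nat.cast_ne_zero.2 (NeZero.ne n))

variable {V E : Type*} [DecidableEq V] [DecidableEq E] (C : V → Finset E)

lemma sum_cyclicStrategy_mul_card_inter_le [Fintype E] {g : ZMod n → E} (hg : Function.Injective g)
    (hpack : ∀ i : V, #(C i ∩ univ.image g) ≤ 1) {b : ℕ} (hb : b ≤ n) (S : Finset V) :
    ∑ T, cyclicStrategy g b T * #(S.biUnion C ∩ T) ≤ #S * b / n := by
  rw [sum_cyclicStrategy_mul]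
  gcongr
  have : ∑ k, #(S.biUnion C ∩ (cyclicWindow b k).image g) ≤ #S * b := by
    simp_rw [card_inter_image_of_injective hg, sum_card_inter_cyclicWindow hb, mul_comm b]
    gcongr
    exact card_filter_mem_biUnion_le C hg hpack S
  exact_mod_cast this

lemma le_sum_cyclicStrategy_mul_card_inter [Fintype V] {f : ZMod n → V}
    (hcover : ∀ e : E, ∃ k : ZMod n, e ∈ C (f k)) {b : ℕ} (hb : b ≤ n) (T : Finset E) :
    b * #T / n ≤ ∑ S, cyclicStrategy f b S * #(S.biUnion C ∩ T) := by
  rw [sum_cyclicStrategy_mul]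
  gcongr
  choose k hk using hcover
  have : b * #T ≤ ∑ j, #(((cyclicWindow b j).image f).biUnion C ∩ T) := calc
    b * #T = ∑ e ∈ T, #{j | k e ∈ cyclicWindow b j} := by
      simp [card_filter_mem_cyclicWindow hb, mul_comm]
    _ ≤ ∑ e ∈ T, #{j | e ∈ ((cyclicWindow b j).image f).biUnion C} :=
      sum_le_sum fun e _ => card_le_card <| monotone_filter_right _ fun j _ hj =>
        mem_biUnion.2 ⟨f (k e), mem_image_of_mem f hj, hk e⟩
    _ = ∑ j, #(((cyclicWindow b j).image f).biUnion C ∩ T) := by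
      rw [← sum_card_inter_eq_sum_card_filter_mem]
      simp_rw [inter_comm]
  exact_mod_cast this

lemma defenderPayoff_cyclicStrategy_le [Fintype V] [Fintype E] {g : ZMod n → E}
    (hg : Function.Injective g)
    (hpack : ∀ i : V, #(C i ∩ univ.image g) ≤ 1) {b₁ b₂ : ℕ} (hb₂ : b₂ ≤ n)
    {τ : Finset V → ℝ} (hτ : IsMixed b₁ τ) :
    defenderPayoff C τ (cyclicStrategy g b₂) ≤ b₁ * b₂ / n := by
  rw [defenderPayoff_eq_sum_mul_left]
  refine hτ.sum_mul_le fun S hS => (sum_cyclicStrategy_mul_card_inter_le C hg hpack hb₂ S).trans ?_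
  gcongr

lemma le_defenderPayoff_cyclicStrategy [Fintype V] [Fintype E] {f : ZMod n → V}
    (hcover : ∀ e : E, ∃ k : ZMod n, e ∈ C (f k)) {b : ℕ} (hb : b ≤ n)
    {τ : Finset E → ℝ} (hτ : ∀ T, 0 ≤ τ T) :
    b * (∑ T, τ T * #T) / n ≤ defenderPayoff C (cyclicStrategy f b) τ := by
  rw [defenderPayoff_eq_sum_mul_right, mul_sum, sum_div]
  refine sum_le_sum fun T _ => ?_
  calc b * (τ T * #T) / n = τ T * (b * #T / n) := by ring
    _ ≤ _ := mul_le_mul_of_nonneg_left (le_sum_cyclicStrategy_mul_card_inter C hcover hb T) (hτ T)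

lemma attackerPayoff_cyclicStrategy_le [Fintype V] [Fintype E] {f : ZMod n → V}
    (hcover : ∀ e : E, ∃ k : ZMod n, e ∈ C (f k)) {b₁ b₂ : ℕ} (hb₁ : b₁ ≤ n)
    {τ : Finset E → ℝ} (hτ : IsMixed b₂ τ) :
    attackerPayoff C (cyclicStrategy f b₁) τ ≤ b₂ - b₁ * b₂ / n := by
  rw [attackerPayoff_eq_sub C (isMixed_cyclicStrategy f b₁).2.1]
  have hlow := le_defenderPayoff_cyclicStrategy C hcover hb₁ hτ.1
  have hsize : ∑ T, τ T * #T ≤ b₂ := hτ.sum_mul_le fun T hT => by exact_mod_cast hT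
  have hratio : (b₁ : ℝ) / n ≤ 1 := div_le_one_of_le₀ (by exact_mod_cast hb₁) (Nat.cast_nonneg n)
  calc ∑ T, τ T * #T - defenderPayoff C (cyclicStrategy f b₁) τ
      ≤ (1 - b₁ / n) * ∑ T, τ T * #T := by rw [mul_div_right_comm] at hlow; linarith
    _ ≤ (1 - b₁ / n) * b₂ := mul_le_mul_of_nonneg_left hsize (by linarith)
    _ = b₂ - b₁ * b₂ / n := by ring

end CyclicStrategy

theorem cyclic_profile_NE_general {V E : Type*} [DecidableEq V] [DecidableEq E]
    [Fintype V] [Fintype E] (C : V → Finset E) (b₁ b₂ n : ℕ) [NeZero n]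
    (f : ZMod n → V)
    (hcover : ∀ e : E, ∃ k : ZMod n, e ∈ C (f k))
    (g : ZMod n → E) (hg : Function.Injective g)
    (hpack : ∀ i : V, (C i ∩ Finset.univ.image g).card ≤ 1)
    (hb1 : b₁ < n) (hb2 : b₂ < n)
    (σ1 : Finset V → ℝ)
    (hσ1 : σ1 = fun S => ((Finset.univ.filter (fun k : ZMod n =>
      (Finset.range b₁).image (fun t : ℕ => f (k + (t : ZMod n))) = S)).card : ℝ) / n)
    (σ2 : Finset E → ℝ)
    (hσ2 : σ2 = fun T => ((Finset.univ.filter (fun k : ZMod n =>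
      (Finset.range b₂).image (fun t : ℕ => g (k + (t : ZMod n))) = T)).card : ℝ) / n) :
    (∀ τ1 : Finset V → ℝ, IsMixed b₁ τ1 →
        defenderPayoff C τ1 σ2 ≤ defenderPayoff C σ1 σ2) ∧
    (∀ τ2 : Finset E → ℝ, IsMixed b₂ τ2 →
        attackerPayoff C σ1 τ2 ≤ attackerPayoff C σ1 σ2) ∧
    defenderPayoff C σ1 σ2 = (b₁ : ℝ) * b₂ / n := by
  obtain rfl : σ1 = cyclicStrategy f b₁ := by
    ext S; simp only [hσ1, cyclicStrategy, image_cyclicWindow]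
  obtain rfl : σ2 = cyclicStrategy g b₂ := by
    ext T; simp only [hσ2, cyclicStrategy, image_cyclicWindow]
  have hval : defenderPayoff C (cyclicStrategy f b₁) (cyclicStrategy g b₂) = b₁ * b₂ / n := by
    refine le_antisymm
      (defenderPayoff_cyclicStrategy_le C hg hpack hb2.le (isMixed_cyclicStrategy f b₁)) ?_
    simpa [sum_cyclicStrategy_mul_card hg hb2.le] using
      le_defenderPayoff_cyclicStrategy C hcover hb1.le (isMixed_cyclicStrategy g b₂).1
  refine ⟨fun τ hτ => hval ▸ defenderPayoff_cyclicStrategy_le C hg hpack hb2.le hτ,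
    fun τ hτ => ?_, hval⟩
  rw [attackerPayoff_eq_sub C (isMixed_cyclicStrategy f b₁).2.1 (cyclicStrategy g b₂), hval,
    sum_cyclicStrategy_mul_card hg hb2.le]
  exact attackerPayoff_cyclicStrategy_le C hcover hb1.le hτ

/-- When `n* = m* = n`, `b₁ < n`, `b₂ < n`, the profile (uniform over the cyclic
`b₁`-windows of a minimum set cover, uniform over the cyclic `b₂`-windows of a
maximum set packing) is a Nash equilibrium of the zero-sum inspection game, and
the defender's value equals `b₁ b₂ / n`. -/
theorem cyclic_profile_NE {V E : Type*} [DecidableEq V] [DecidableEq E]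
    [Fintype V] [Fintype E] (C : V → Finset E) (b₁ b₂ n : ℕ) [NeZero n]
    (hmon : ∀ e : E, ∃ i : V, e ∈ C i)
    (f : ZMod n → V) (hf : Function.Injective f)
    (hcover : ∀ e : E, ∃ k : ZMod n, e ∈ C (f k))
    (hmincover : ∀ S : Finset V, (∀ e : E, ∃ i ∈ S, e ∈ C i) → n ≤ S.card)
    (g : ZMod n → E) (hg : Function.Injective g)
    (hpack : ∀ i : V, (C i ∩ Finset.univ.image g).card ≤ 1)
    (hmaxpack : ∀ T : Finset E, (∀ i : V, (C i ∩ T).card ≤ 1) → T.card ≤ n)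
    (hb1 : b₁ < n) (hb2 : b₂ < n)
    (σ1 : Finset V → ℝ)
    (hσ1 : σ1 = fun S => ((Finset.univ.filter (fun k : ZMod n =>
      (Finset.range b₁).image (fun t : ℕ => f (k + (t : ZMod n))) = S)).card : ℝ) / n)
    (σ2 : Finset E → ℝ)
    (hσ2 : σ2 = fun T => ((Finset.univ.filter (fun k : ZMod n =>
      (Finset.range b₂).image (fun t : ℕ => g (k + (t : ZMod n))) = T)).card : ℝ) / n) :
    (∀ τ1 : Finset V → ℝ, IsMixed b₁ τ1 →
        defenderPayoff C τ1 σ2 ≤ defenderPayoff C σ1 σ2) ∧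
    (∀ τ2 : Finset E → ℝ, IsMixed b₂ τ2 →
        attackerPayoff C σ1 τ2 ≤ attackerPayoff C σ1 σ2) ∧
    defenderPayoff C σ1 σ2 = (b₁ : ℝ) * b₂ / n :=
  cyclic_profile_NE_general C b₁ b₂ n f hcover g hg hpack hb1 hb2 σ1 hσ1 σ2 hσ2
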